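/- arXiv:1608.08114 — 4 statements merged into one kernel-verified Lean document; each statement's English description precedes it below -/
import Mathlib

section
/- Let $B$ be a commutative ring and $g \in B$ a non-zerodivisor. Suppose $\varphi : (n,m)_B \to (n,m)_B$ is an isomorphism in the category $\mathcal{C}$, presented by a block matrix $\begin{pmatrix} \varphi_{(n,n)} & \varphi_{(n,m)} \\ \varphi_{(m,n)} & \varphi_{(m,m)} \end{pmatrix}$ with entries in $B$ (so that the degree-1 component is $\begin{pmatrix} \varphi_{(n,n)} & \varphi_{(n,m)} \\ g\varphi_{(m,n)} & \varphi_{(m,m)} \end{pmatrix}$ and the degree-0 component is $\begin{pmatrix} \varphi_{(n,n)} & g\varphi_{(n,m)} \\ \varphi_{(m,n)} & \varphi_{(m,m)} \end{pmatrix}$). If $B$ is Noetherian local and $g$ lies in the maximal ideal, then the diagonal blocks $\varphi_{(n,n)}$ and $\varphi_{(m,m)}$ are invertible matrices over $B$. -/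
/-- Let `B` be a commutative Noetherian local ring and `g` a non-zerodivisor
lying in the maximal ideal. A morphism `(n,m)_B → (n,m)_B` in `𝒞` is presented by a block
matrix `(φnn φnm; φmn φmm)`; its degree-1 chain component is `(φnn φnm; g·φmn φmm)` and its
degree-0 component is `(φnn g·φnm; φmn φmm)`. If it is an isomorphism (both chain
components are invertible matrices), then the diagonal blocks `φnn` and `φmm` are
invertible matrices over `B`. -/
theorem stmt_3 (B : Type) [CommRing B] [IsNoetherianRing B] [IsLocalRing B]
    (g : B) (hg : g ∈ IsLocalRing.maximalIdeal B) (hreg : g ∈ nonZeroDivisors B)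
    (n m : ℕ)
    (φnn : Matrix (Fin n) (Fin n) B) (φnm : Matrix (Fin n) (Fin m) B)
    (φmn : Matrix (Fin m) (Fin n) B) (φmm : Matrix (Fin m) (Fin m) B)
    (hdeg1 : IsUnit (Matrix.fromBlocks φnn φnm (g • φmn) φmm))
    (hdeg0 : IsUnit (Matrix.fromBlocks φnn (g • φnm) φmn φmm)) :
    IsUnit φnn ∧ IsUnit φmm := by
  classical
  set f := IsLocalRing.residue B with hf
  have hg0 : f g = 0 := Ideal.Quotient.eq_zero_iff_mem.mpr hg
  have hdet : IsUnit (Matrix.fromBlocks φnn φnm (g • φmn) φmm).det :=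
    hdeg1.map (Matrix.detMonoidHom)
  have hdetf : IsUnit (f (Matrix.fromBlocks φnn φnm (g • φmn) φmm).det) := hdet.map f
  rw [RingHom.map_det, RingHom.mapMatrix_apply] at hdetf
  have hzero : (g • φmn).map ⇑f = 0 := by
    ext i j
    simp [Matrix.map_apply, hg0]
  have hmap : (Matrix.fromBlocks φnn φnm (g • φmn) φmm).map ⇑f
      = Matrix.fromBlocks (φnn.map ⇑f) (φnm.map ⇑f) 0 (φmm.map ⇑f) := by
    rw [Matrix.fromBlocks_map, hzero]
  rw [hmap, Matrix.det_fromBlocks_zero₂₁] at hdetf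
  have e1 : f φnn.det = (φnn.map ⇑f).det := by
    rw [RingHom.map_det, RingHom.mapMatrix_apply]
  have e2 : f φmm.det = (φmm.map ⇑f).det := by
    rw [RingHom.map_det, RingHom.mapMatrix_apply]
  have h1 : IsUnit (f φnn.det) := e1 ▸ isUnit_of_mul_isUnit_left hdetf
  have h2 : IsUnit (f φmm.det) := e2 ▸ isUnit_of_mul_isUnit_right hdetf
  have key : ∀ x : B, IsUnit (f x) → IsUnit x := by
    intro x hx
    by_contra hxu
    have hm : x ∈ IsLocalRing.maximalIdeal B := hxu
    have hx0 : f x = 0 := Ideal.Quotient.eq_zero_iff_mem.mpr hm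
    rw [hx0] at hx
    exact hx.ne_zero rfl
  exact ⟨(Matrix.isUnit_iff_isUnit_det _).mpr (key _ h1),
    (Matrix.isUnit_iff_isUnit_det _).mpr (key _ h2)⟩
end

section
/- Let $B$ be a commutative Noetherian local ring and $g$ a non-zerodivisor in its maximal ideal, and suppose every finitely generated projective $B/gB$-module is free. Let $(n,0)_B \xrightarrow{\alpha} (n',0)_B \xrightarrow{\beta} (n'',0)_B$ be chain maps of the complexes $(k,0)_B = [B^{\oplus k} \xrightarrow{g} B^{\oplus k}]$ with $\beta\alpha = 0$. If the induced sequence on $H_0$, i.e. $(B/gB)^{\oplus n} \to (B/gB)^{\oplus n'} \to (B/gB)^{\oplus n''}$, is a short exact sequence, then the original sequence of complexes is split exact: $\alpha$ is a split monomorphism in each degree, $\beta$ is a split epimorphism in each degree, and $\mathrm{Im}(\alpha) = \mathrm{Ker}(\beta)$ degreewise. -/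
/-- A square matrix over a local ring whose reduction mod an ideal contained in the
maximal ideal is the identity has unit determinant. -/
lemma aux_isUnit_det {B : Type} [CommRing B] [IsLocalRing B] {g : B}
    (hg : g ∈ IsLocalRing.maximalIdeal B) {k : ℕ} (D : Matrix (Fin k) (Fin k) B)
    (hD : D.map (Ideal.Quotient.mk (Ideal.span {g})) = 1) : IsUnit D.det := by
  have h1 : Ideal.Quotient.mk (Ideal.span {g}) D.det = 1 := by
    rw [RingHom.map_det, RingHom.mapMatrix_apply, hD, Matrix.det_one]
  have hmem : D.det - 1 ∈ Ideal.span ({g} : Set B) := by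
    have : Ideal.Quotient.mk (Ideal.span {g}) (D.det - 1) = 0 := by
      rw [map_sub, h1, map_one, sub_self]
    rwa [Ideal.Quotient.eq_zero_iff_mem] at this
  have hspan : Ideal.span ({g} : Set B) ≤ IsLocalRing.maximalIdeal B := by
    rw [Ideal.span_le, Set.singleton_subset_iff]; exact hg
  by_contra hne
  have hDet : D.det ∈ IsLocalRing.maximalIdeal B := hne
  have : (1 : B) ∈ IsLocalRing.maximalIdeal B := by
    have := sub_mem hDet (hspan hmem)
    simpa using this
  exact (IsLocalRing.maximalIdeal.isMaximal B).ne_top (Ideal.eq_top_of_isUnit_mem _ this isUnit_one)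

open Matrix in
/-- Let `B` be a commutative Noetherian local ring, `g` a non-zerodivisor in
its maximal ideal, over whose quotient `B/gB` all finitely generated projective modules
are free. Chain maps between the complexes `(k,0)_B = [B^k --g--> B^k]` are given by
single matrices (acting in both degrees). Given `α : (n,0)_B → (n',0)_B`,
`β : (n',0)_B → (n'',0)_B` with `β ∘ α = 0`, if the induced sequence on `H₀`,
`0 → (B/gB)^n → (B/gB)^{n'} → (B/gB)^{n''} → 0`, is short exact, then the sequence of
complexes is split exact: `α` is a split monomorphism, `β` a split epimorphism (in each
degree, via a single splitting matrix), and `Im α = Ker β` degreewise. -/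
theorem stmt_5 (B : Type) [CommRing B] [IsNoetherianRing B] [IsLocalRing B]
    (g : B) (hg : g ∈ IsLocalRing.maximalIdeal B) (hreg : g ∈ nonZeroDivisors B)
    (hfree : ∀ (M : Type) [AddCommGroup M] [Module (B ⧸ Ideal.span {g}) M],
      Module.Finite (B ⧸ Ideal.span {g}) M → Module.Projective (B ⧸ Ideal.span {g}) M →
      Module.Free (B ⧸ Ideal.span {g}) M)
    (n n' n'' : ℕ)
    (α : Matrix (Fin n') (Fin n) B) (β : Matrix (Fin n'') (Fin n') B)
    (hβα : β * α = 0)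
    -- the induced sequence on `H₀` is short exact
    (hinj : Function.Injective (α.map (Ideal.Quotient.mk (Ideal.span {g}))).mulVecLin)
    (hsurj : Function.Surjective (β.map (Ideal.Quotient.mk (Ideal.span {g}))).mulVecLin)
    (hexact : LinearMap.range (α.map (Ideal.Quotient.mk (Ideal.span {g}))).mulVecLin
      = LinearMap.ker (β.map (Ideal.Quotient.mk (Ideal.span {g}))).mulVecLin) :
    (∃ σ : Matrix (Fin n) (Fin n') B, σ * α = 1) ∧
    (∃ τ : Matrix (Fin n') (Fin n'') B, β * τ = 1) ∧
    LinearMap.range α.mulVecLin = LinearMap.ker β.mulVecLin := by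
  classical
  set π : B →+* B ⧸ Ideal.span {g} := Ideal.Quotient.mk (Ideal.span {g}) with hπdef
  set A : Matrix (Fin n') (Fin n) (B ⧸ Ideal.span {g}) := α.map π with hAdef
  set Bb : Matrix (Fin n'') (Fin n') (B ⧸ Ideal.span {g}) := β.map π with hBdef
  have hBA : Bb * A = 0 := by
    rw [hAdef, hBdef, ← Matrix.map_mul, hβα]
    ext i j; simp
  have hBAlin : Bb.mulVecLin ∘ₗ A.mulVecLin = 0 := by
    rw [← Matrix.mulVecLin_mul, hBA, Matrix.mulVecLin_zero]
  -- choice of entrywise lifts along π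
  have πsurj : Function.Surjective π := Ideal.Quotient.mk_surjective
  choose lift hlift using πsurj
  -- right inverse of Bb over the quotient
  obtain ⟨h, hh⟩ := Module.projective_lifting_property Bb.mulVecLin LinearMap.id hsurj
  have hτ'mat : Bb * LinearMap.toMatrix' h = 1 := by
    have := congrArg LinearMap.toMatrix' hh
    rwa [LinearMap.toMatrix'_comp, LinearMap.toMatrix'_id,
      ← Matrix.toLin'_apply' Bb, LinearMap.toMatrix'_toLin'] at this
  -- left inverse of A over the quotient
  set plin : (Fin n' → B ⧸ Ideal.span {g}) →ₗ[B ⧸ Ideal.span {g}] (Fin n' → B ⧸ Ideal.span {g}) :=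
    LinearMap.id - h ∘ₗ Bb.mulVecLin with hplindef
  have hrange : ∀ v, plin v ∈ LinearMap.range A.mulVecLin := by
    intro v
    rw [hexact]
    have h1 : Bb.mulVecLin (h (Bb.mulVecLin v)) = Bb.mulVecLin v :=
      LinearMap.congr_fun hh (Bb.mulVecLin v)
    rw [LinearMap.mem_ker, hplindef]
    simp only [LinearMap.sub_apply, LinearMap.id_apply, LinearMap.comp_apply, map_sub, h1,
      sub_self]
  set e := LinearEquiv.ofInjective A.mulVecLin hinj with hedef
  set pcod := LinearMap.codRestrict (LinearMap.range A.mulVecLin)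
    plin hrange with hpdef
  set σlin := (e.symm : LinearMap.range A.mulVecLin →ₗ[B ⧸ Ideal.span {g}] (Fin n → B ⧸ Ideal.span {g})) ∘ₗ pcod with hσdef
  have hσlin : σlin ∘ₗ A.mulVecLin = LinearMap.id := by
    apply LinearMap.ext
    intro x
    have h0 : Bb.mulVecLin (A.mulVecLin x) = 0 := by
      have := LinearMap.congr_fun hBAlin x
      simpa using this
    have hpc : pcod (A.mulVecLin x) = e x := by
      apply Subtype.ext
      rw [hpdef, LinearMap.codRestrict_apply, hedef, LinearEquiv.ofInjective_apply, hplindef]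
      simp only [LinearMap.sub_apply, LinearMap.id_apply, LinearMap.comp_apply, h0, map_zero,
        sub_zero]
    show e.symm (pcod (A.mulVecLin x)) = x
    rw [hpc, LinearEquiv.symm_apply_apply]
  have hσ'mat : LinearMap.toMatrix' σlin * A = 1 := by
    have := congrArg LinearMap.toMatrix' hσlin
    rwa [LinearMap.toMatrix'_comp, LinearMap.toMatrix'_id,
      ← Matrix.toLin'_apply' A, LinearMap.toMatrix'_toLin'] at this
  -- lift the two splittings to B
  set σ₀ : Matrix (Fin n) (Fin n') B := Matrix.of fun i j => lift (LinearMap.toMatrix' σlin i j)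
    with hσ₀def
  set τ₀ : Matrix (Fin n') (Fin n'') B := Matrix.of fun i j => lift (LinearMap.toMatrix' h i j)
    with hτ₀def
  have hσ₀map : σ₀.map π = LinearMap.toMatrix' σlin := by
    ext i j; simp [hσ₀def, Matrix.map_apply, hlift]
  have hτ₀map : τ₀.map π = LinearMap.toMatrix' h := by
    ext i j; simp [hτ₀def, Matrix.map_apply, hlift]
  have hσunit : IsUnit (σ₀ * α).det := by
    apply aux_isUnit_det hg
    rw [Matrix.map_mul, hσ₀map]
    exact hσ'mat
  have hτunit : IsUnit (β * τ₀).det := by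
    apply aux_isUnit_det hg
    rw [Matrix.map_mul, hτ₀map]
    exact hτ'mat
  have hσ : ((σ₀ * α)⁻¹ * σ₀) * α = 1 := by
    rw [Matrix.mul_assoc, Matrix.nonsing_inv_mul _ hσunit]
  set τ : Matrix (Fin n') (Fin n'') B := τ₀ * (β * τ₀)⁻¹ with hτdef
  have hτ : β * τ = 1 := by
    rw [hτdef, ← Matrix.mul_assoc, Matrix.mul_nonsing_inv _ hτunit]
  refine ⟨⟨(σ₀ * α)⁻¹ * σ₀, hσ⟩, ⟨τ, hτ⟩, ?_⟩
  -- exactness over B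
  apply le_antisymm
  · rintro v ⟨x, rfl⟩
    have : β.mulVecLin (α.mulVecLin x) = 0 := by
      have : (β * α).mulVecLin x = 0 := by rw [hβα]; simp
      rwa [Matrix.mulVecLin_mul] at this
    simpa [LinearMap.mem_ker] using this
  · -- first: range α ⊔ range τ = ⊤ by Nakayama
    have hτb : Bb * τ.map π = 1 := by
      have := congrArg (fun M => M.map π) hτ
      simpa [Matrix.map_mul] using this
    have htop : (⊤ : Submodule B (Fin n' → B)) ≤
        LinearMap.range α.mulVecLin ⊔ LinearMap.range τ.mulVecLin := by
      have hjac : Ideal.span ({g} : Set B) ≤ Ideal.jacobson ⊥ := by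
        rw [IsLocalRing.jacobson_eq_maximalIdeal ⊥ bot_ne_top]
        rw [Ideal.span_le, Set.singleton_subset_iff]; exact hg
      apply Submodule.le_of_le_smul_of_le_jacobson_bot
        (Module.finite_def.mp inferInstance) hjac
      intro v _
      -- find approximate preimage over the quotient
      set vb : Fin n' → B ⧸ Ideal.span {g} := π ∘ v with hvbdef
      set wb : Fin n' → B ⧸ Ideal.span {g} := vb - (τ.map π) *ᵥ (Bb *ᵥ vb) with hwbdef
      have hwker : Bb *ᵥ wb = 0 := by
        rw [hwbdef, Matrix.mulVec_sub, Matrix.mulVec_mulVec, hτb, Matrix.one_mulVec, sub_self]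
      have hwrange : wb ∈ LinearMap.range A.mulVecLin := by
        rw [hexact]
        simpa [LinearMap.mem_ker] using hwker
      obtain ⟨a', ha'⟩ := hwrange
      set a : Fin n → B := fun i => lift (a' i) with hadef
      set b : Fin n'' → B := fun i => lift ((Bb *ᵥ vb) i) with hbdef
      set u : Fin n' → B := α *ᵥ a + τ *ᵥ b with hudef
      have hπu : ∀ i, π ((v - u) i) = 0 := by
        intro i
        have h1 : π ((α *ᵥ a) i) = (A *ᵥ a') i := by
          rw [RingHom.map_mulVec]
          congr 1
          ext j; simp [hadef, hlift]
        have h2 : π ((τ *ᵥ b) i) = ((τ.map π) *ᵥ (Bb *ᵥ vb)) i := by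
          rw [RingHom.map_mulVec]
          congr 1
          ext j; simp [hbdef, hlift]
        have h3 : (A *ᵥ a') i = wb i := by
          have := congrFun ha' i
          simpa using this
        have : π ((v - u) i) = vb i - (wb i + ((τ.map π) *ᵥ (Bb *ᵥ vb)) i) := by
          simp [hudef, hvbdef, h1, h2, h3, map_sub, map_add]
        rw [this, hwbdef]
        simp
      have hvu : v - u ∈ Ideal.span ({g} : Set B) • (⊤ : Submodule B (Fin n' → B)) := by
        have : v - u = ∑ i, Pi.single i ((v - u) i) := (Finset.univ_sum_single (v - u)).symm
        rw [this]
        apply Submodule.sum_mem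
        intro i _
        have hmem : (v - u) i ∈ Ideal.span ({g} : Set B) := by
          rw [← Ideal.Quotient.eq_zero_iff_mem]
          exact hπu i
        have : (Pi.single i ((v - u) i) : Fin n' → B) = (v - u) i • (Pi.single i 1 : Fin n' → B) := by
          ext j
          by_cases hij : j = i
          · subst hij; simp
          · simp [Pi.single_eq_of_ne hij]
        rw [this]
        exact Submodule.smul_mem_smul hmem Submodule.mem_top
      have hu : u ∈ LinearMap.range α.mulVecLin ⊔ LinearMap.range τ.mulVecLin := by
        apply Submodule.add_mem_sup
        · exact ⟨a, rfl⟩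
        · exact ⟨b, rfl⟩
      have : v = u + (v - u) := by ring
      rw [this]
      exact Submodule.add_mem _ (Submodule.mem_sup_left hu) (Submodule.mem_sup_right hvu)
    intro v hv
    have hvmem : v ∈ LinearMap.range α.mulVecLin ⊔ LinearMap.range τ.mulVecLin :=
      htop Submodule.mem_top
    obtain ⟨x, ⟨a, ha⟩, y, ⟨b, hb⟩, hxy⟩ := Submodule.mem_sup.mp hvmem
    have hβv : β *ᵥ v = 0 := by simpa [LinearMap.mem_ker] using hv
    have hb0 : b = 0 := by
      have : β *ᵥ v = β *ᵥ (α *ᵥ a) + β *ᵥ (τ *ᵥ b) := by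
        rw [← hxy, ← ha, ← hb]
        simp [Matrix.mulVec_add, Matrix.mulVecLin_apply]
      rw [hβv, Matrix.mulVec_mulVec, Matrix.mulVec_mulVec, hβα, hτ] at this
      simpa using this.symm
    refine ⟨a, ?_⟩
    rw [← hxy, ← ha, ← hb, hb0]
    simp [Matrix.mulVecLin_apply]
end

section
/- Let $D$ be a finite-dimensional division algebra over $\mathbb{Q}_p$ with ring of integers (maximal order) $A$ and uniformizer $a$, and suppose the inner automorphism $x \mapsto axa^{-1}$ induces a nontrivial automorphism of the residue field of $A$. Then there exists $x \in A^\times$ such that $y = axa^{-1}x^{-1}$ has residue class $\neq 1$ in the residue field; in particular $y \in A^\times$ is a commutator in $D^\times$ (hence trivial in $K_1(D) = (D^\times)^{\mathrm{ab}}$) but nontrivial in $(A^\times)^{\mathrm{ab}}$, so the canonical map $K_1(A) \to K_1(D)$ is not injective. -/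
open Function

open scoped commutatorElement

/-!
Conjugation by the prime element `a` restricts to a ring endomorphism `σ` of `A`. If `σ` is
nontrivial modulo `a` at some `u`, it is so at a unit (`u` itself, or `u + 1` when `u ≡ 0`),
say `x`. Then `y = σ(x) x⁻¹` is the commutator `⁅a, x⁆` in `Dˣ`, but its residue `π(σ x) / π(x)`
is not `1`; since `kˣ` is abelian, the residue map factors through `(Aˣ)ᵃᵇ`, so `y` survives
there.
-/

namespace Subring

variable {D : Type*} [DivisionRing D]

def conj (A : Subring D) {a : D} (ha : a ≠ 0) (hA : ∀ r : A, a * r * a⁻¹ ∈ A) : A →+* A where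
  toFun r := ⟨a * r * a⁻¹, hA r⟩
  map_one' := Subtype.ext (by simp [ha])
  map_mul' r s := Subtype.ext (by simp [mul_assoc, ha])
  map_zero' := Subtype.ext (by simp)
  map_add' r s := Subtype.ext (by simp [mul_add, add_mul])

@[simp]
theorem coe_conj_apply (A : Subring D) {a : D} (ha : a ≠ 0) (hA : ∀ r : A, a * r * a⁻¹ ∈ A)
    (r : A) : ((A.conj ha hA r : A) : D) = a * r * a⁻¹ :=
  rfl

@[simp]
theorem coe_units_inv (A : Subring D) (x : Aˣ) : (((x⁻¹ : Aˣ) : A) : D) = ((x : A) : D)⁻¹ :=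
  map_units_inv A.subtype x

end Subring

theorem exists_unit_map_ne_of_exists_map_ne {A k : Type*} [Ring A] [Ring k] (σ : A →+* A)
    (π : A →+* k) (hlocal : ∀ r : A, π r ≠ 0 → IsUnit r) (h : ∃ u : A, π (σ u) ≠ π u) :
    ∃ x : Aˣ, π (σ x) ≠ π x := by
  obtain ⟨u, hu⟩ := h
  have : Nontrivial k := ⟨⟨_, _, hu⟩⟩
  by_cases hu0 : π u = 0
  · obtain ⟨x, hx⟩ := hlocal (u + 1) (by simp [hu0])
    refine ⟨x, fun hx' => hu ?_⟩
    simpa [hx] using hx'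
  · obtain ⟨x, rfl⟩ := hlocal u hu0
    exact ⟨x, hu⟩

theorem Units.map_mul_inv_ne_one {A k : Type*} [Monoid A] [Monoid k] (π : A →* k) {x z : Aˣ}
    (h : π z ≠ π x) : Units.map π (z * x⁻¹) ≠ 1 := by
  rw [map_mul, map_inv, ne_eq, _root_.mul_inv_eq_one]
  exact fun h' => h (congrArg Units.val h')

namespace Abelianization

theorem of_ne_one_of_map_ne_one {G H : Type*} [Group G] [CommGroup H] (f : G →* H) {g : G}
    (h : f g ≠ 1) : of g ≠ 1 := by
  intro hg
  apply h
  simpa using congrArg (lift f) hg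

theorem of_commutatorElement {G : Type*} [Group G] (g h : G) : of ⁅g, h⁆ = 1 := by
  rw [map_commutatorElement, commutatorElement_eq_one_iff_commute]
  exact Commute.all _ _

theorem not_injective_map_of_map_eq_one {G H : Type*} [Group G] [Group H] (f : G →* H) {g : G}
    (hg : of g ≠ 1) (hfg : of (f g) = 1) : ¬ Injective (map f) :=
  fun hinj => hg (hinj (by rw [map_of, hfg, map_one]))

end Abelianization

theorem stmt_14_general
    (D : Type) [DivisionRing D]
    (A : Subring D) (a : A) (ha : (a : D) ≠ 0)
    (hconj : ∀ r : A, (a : D) * r * (a : D)⁻¹ ∈ A)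
    (k : Type) [Field k] (π : A →+* k)
    (hlocal : ∀ r : A, π r ≠ 0 → IsUnit r)
    (hnontriv : ∃ u : A, π ⟨(a : D) * u * (a : D)⁻¹, hconj u⟩ ≠ π u) :
    (∃ (x y : Aˣ),
      ((y : A) : D) = (a : D) * ((x : A) : D) * (a : D)⁻¹ * (((x : A) : D))⁻¹ ∧
      π (y : A) ≠ 1 ∧
      -- `y` is trivial in `K₁(D) = (D^×)^{ab}` …
      Abelianization.of (Units.map A.subtype.toMonoidHom y) = 1 ∧
      -- … but nontrivial in `K₁(A) = (A^×)^{ab}`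
      Abelianization.of y ≠ 1) ∧
    ¬ Injective (Abelianization.map (Units.map A.subtype.toMonoidHom) :
        Abelianization Aˣ → Abelianization Dˣ) := by
  set σ := A.conj ha hconj
  obtain ⟨x, hx⟩ := exists_unit_map_ne_of_exists_map_ne σ π hlocal hnontriv
  set y : Aˣ := Units.map σ.toMonoidHom x * x⁻¹
  have hy : ((y : A) : D) = (a : D) * ((x : A) : D) * (a : D)⁻¹ * (((x : A) : D))⁻¹ := by
    simp [y, σ]
  have hπy : Units.map π.toMonoidHom y ≠ 1 := Units.map_mul_inv_ne_one π.toMonoidHom hx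
  have hyD : Units.map A.subtype.toMonoidHom y =
      ⁅Units.mk0 (a : D) ha, Units.map A.subtype.toMonoidHom x⁆ := by
    ext
    simp [hy, commutatorElement_def]
  have htrivD := hyD ▸ Abelianization.of_commutatorElement _ _
  have hnontrivA := Abelianization.of_ne_one_of_map_ne_one _ hπy
  refine ⟨⟨x, y, hy, fun h => hπy (Units.ext h), htrivD, hnontrivA⟩, ?_⟩
  exact Abelianization.not_injective_map_of_map_eq_one _ hnontrivA htrivD

/-- Kato's counterexample: Let `D` be a finite-dimensional division algebra
over `ℚ_p`, `A ⊆ D` its ring of integers (a noncommutative local ring, every element with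
nonzero residue being a unit), `a ∈ A` a prime element (`a ≠ 0`) with residue field
`k = A/aA` (given by a surjection `π : A → k` with kernel `aA`), such that conjugation by
`a` preserves `A` and induces a nontrivial automorphism of the residue field. Then there
is `x ∈ A^×` such that `y = a x a⁻¹ x⁻¹` has residue `≠ 1`; `y` is a unit of `A`, a
commutator in `D^×` (hence trivial in `K₁(D) = (D^×)^{ab}`) but nontrivial in
`K₁(A) = (A^×)^{ab}`; in particular the canonical map `K₁(A) → K₁(D)` is not
injective. -/
theorem stmt_14 (p : ℕ) [Fact p.Prime]
    (D : Type) [DivisionRing D] [Algebra ℚ_[p] D] [FiniteDimensional ℚ_[p] D]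
    (A : Subring D) (a : A) (ha : (a : D) ≠ 0)
    (hconj : ∀ r : A, (a : D) * r * (a : D)⁻¹ ∈ A)
    (k : Type) [Field k] (π : A →+* k) (hπ : Surjective π)
    (hker : ∀ r : A, π r = 0 ↔ ∃ s : A, (r : D) = (a : D) * s)
    (hlocal : ∀ r : A, π r ≠ 0 → IsUnit r)
    (hnontriv : ∃ u : A, π ⟨(a : D) * u * (a : D)⁻¹, hconj u⟩ ≠ π u) :
    (∃ (x y : Aˣ),
      ((y : A) : D) = (a : D) * ((x : A) : D) * (a : D)⁻¹ * (((x : A) : D))⁻¹ ∧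
      π (y : A) ≠ 1 ∧
      -- `y` is trivial in `K₁(D) = (D^×)^{ab}` …
      Abelianization.of (Units.map A.subtype.toMonoidHom y) = 1 ∧
      -- … but nontrivial in `K₁(A) = (A^×)^{ab}`
      Abelianization.of y ≠ 1) ∧
    ¬ Injective (Abelianization.map (Units.map A.subtype.toMonoidHom) :
        Abelianization Aˣ → Abelianization Dˣ) :=
  stmt_14_general D A a ha hconj k π hlocal hnontriv
end

section
/- Let $\mathcal{A}$ be an abelian category in which every object is Noetherian, and let $\mathcal{B}$ be a topologizing subcategory (a nonempty full subcategory closed under finite direct sums, subobjects, and quotient objects). Then the following are equivalent: (1) every object $x$ of $\mathcal{A}$ admits a finite filtration $0 = x_n \le x_{n-1} \le \cdots \le x_0 = x$ by subobjects such that each quotient $x_i/x_{i+1}$ is isomorphic to an object of $\mathcal{B}$; (2) the Serre radical of $\mathcal{B}$ in $\mathcal{A}$ (the smallest Serre subcategory, i.e., extension-closed topologizing subcategory, containing $\mathcal{B}$) equals all of $\mathcal{A}$. -/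
open CategoryTheory Limits

variable {C : Type} [Category C] [Abelian C]

/-- A topologizing subcategory: a nonempty, isomorphism-closed full subcategory (given by
a predicate on objects) closed under finite direct sums, subobjects and quotient
objects. -/
def IsTopologizing (P : C → Prop) : Prop :=
  (∃ X, P X) ∧
  (∀ {X Y : C}, (X ≅ Y) → P X → P Y) ∧
  (∀ X Y : C, P X → P Y → P (X ⊞ Y)) ∧
  (∀ {X Y : C} (f : X ⟶ Y), Mono f → P Y → P X) ∧
  (∀ {X Y : C} (f : X ⟶ Y), Epi f → P X → P Y)

/-- A Serre subcategory: an extension-closed topologizing subcategory. -/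
def IsSerre (P : C → Prop) : Prop :=
  IsTopologizing P ∧
  ∀ S : ShortComplex C, S.ShortExact → P S.X₁ → P S.X₃ → P S.X₂

/-- The Serre radical of `P`: the smallest Serre subcategory containing `P`
(the intersection of all Serre subcategories containing `P`). -/
def serreRadical (P : C → Prop) : C → Prop := fun X =>
  ∀ Q : C → Prop, IsSerre Q → (∀ Y : C, P Y → Q Y) → Q X

/-- `X` has a finite filtration by subobjects whose successive quotients lie in `P`. -/
def HasDevissageFiltration (P : C → Prop) (X : C) : Prop :=
  ∃ (n : ℕ) (s : Fin (n + 1) → Subobject X)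
    (hmono : ∀ i : Fin n, s i.succ ≤ s i.castSucc),
    s 0 = ⊤ ∧ s (Fin.last n) = ⊥ ∧
    ∀ i : Fin n, ∃ b : C, P b ∧
      Nonempty ((cokernel (Subobject.ofLE (s i.succ) (s i.castSucc) (hmono i))) ≅ b)

/-!
The objects admitting such a filtration are exactly the iterated extensions of objects of `P`:
those built from `0` by repeatedly passing from `kernel g` to `X`, for an epimorphism `g : X ⟶ Y`
with `P Y`. These form a Serre subcategory. Closure under subobjects and quotients is inherited
from `P` one extension step at a time, and closure under extensions comes from the exact sequence
`0 ⟶ ker f ⟶ ker (f ≫ g) ⟶ ker g ⟶ 0` for an epimorphism `f`. Since every Serre subcategory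
containing `P` contains all iterated extensions, they form the Serre radical of `P`.
-/

open ZeroObject

section KernelComp

variable {X Y Z : C} (f : X ⟶ Y) (g : Y ⟶ Z)

lemma epi_kernelMap_comp [Epi f] : Epi (kernel.map (f ≫ g) g f (𝟙 Z) (by simp)) :=
  ((kernelCokernelCompSequence_exact f g).exact 1).epi_f
    ((isZero_cokernel_of_epi f).eq_of_tgt _ _)

noncomputable def kernelKernelMapCompIso :
    kernel (kernel.map (f ≫ g) g f (𝟙 Z) (by simp)) ≅ kernel f :=
  (IsLimit.conePointUniqueUpToIso ((kernelCokernelCompSequence_exact f g).exact 0).fIsKernel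
    (kernelIsKernel _)).symm

end KernelComp

lemma IsTopologizing.prop_of_iso {P : C → Prop} (hP : IsTopologizing P) {X Y : C} (e : X ≅ Y)
    (h : P X) : P Y :=
  hP.2.1 e h

lemma IsTopologizing.prop_of_mono {P : C → Prop} (hP : IsTopologizing P) {X Y : C} (f : X ⟶ Y)
    [Mono f] (h : P Y) : P X :=
  hP.2.2.2.1 f inferInstance h

lemma IsTopologizing.prop_of_epi {P : C → Prop} (hP : IsTopologizing P) {X Y : C} (f : X ⟶ Y)
    [Epi f] (h : P X) : P Y :=
  hP.2.2.2.2 f inferInstance h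

lemma shortExact_kernel {X Y : C} (g : X ⟶ Y) [Epi g] :
    (ShortComplex.mk (kernel.ι g) g (kernel.condition g)).ShortExact :=
  ⟨ShortComplex.exact_kernel g⟩

inductive IsIteratedExtension (P : C → Prop) : C → Prop
  | of_isZero {X : C} : IsZero X → IsIteratedExtension P X
  | extend {X Y : C} (g : X ⟶ Y) [Epi g] :
      IsIteratedExtension P (kernel g) → P Y → IsIteratedExtension P X

namespace IsIteratedExtension

variable {P : C → Prop}

lemma of_prop {X : C} (h : P X) : IsIteratedExtension P X :=
  extend (𝟙 X) (of_isZero (isZero_kernel_of_mono _)) h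

lemma of_iso {X Y : C} (e : X ≅ Y) (h : IsIteratedExtension P X) : IsIteratedExtension P Y := by
  induction h generalizing Y with
  | of_isZero hX => exact of_isZero (hX.of_iso e.symm)
  | extend g _ hZ ih => exact extend (e.inv ≫ g) (ih (kernelIsIsoComp e.inv g).symm) hZ

lemma of_mono (hP : IsTopologizing P) {X Y : C} (m : Y ⟶ X) [Mono m]
    (h : IsIteratedExtension P X) : IsIteratedExtension P Y := by
  induction h generalizing Y with
  | of_isZero hX => exact of_isZero (hX.of_mono m)
  | extend g _ hZ ih =>
    -- `kernel (m ≫ g)`, that is `Y ∩ kernel g`, is a subobject of `kernel g`.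
    have : Mono (kernel.map _ g m (image.ι (m ≫ g)) (image.fac _)) :=
      mono_of_mono_fac (kernel.lift_ι _ _ _)
    exact extend (factorThruImage (m ≫ g)) (ih (kernel.map _ g m _ (image.fac _)))
      (hP.prop_of_mono (image.ι _) hZ)

lemma of_epi (hP : IsTopologizing P) {X Y : C} (e : X ⟶ Y) [Epi e]
    (h : IsIteratedExtension P X) : IsIteratedExtension P Y := by
  induction h generalizing Y with
  | of_isZero hX => exact of_isZero (hX.of_epi e)
  | extend g _ hZ ih =>
    -- `Y` is an extension of `cokernel u`, a quotient of `Z`, by the image of `u`.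
    let u := kernel.ι g ≫ e
    have hu : kernel.ι g ≫ e ≫ cokernel.π u = 0 := by
      rw [← Category.assoc]; exact cokernel.condition u
    have : Epi (Abelian.epiDesc g _ hu) := epi_of_epi_fac (Abelian.comp_epiDesc g _ hu)
    exact extend (cokernel.π u) (ih (Abelian.factorThruImage u))
      (hP.prop_of_epi (Abelian.epiDesc g _ hu) hZ)

lemma of_epi_of_kernel {X Z : C} (f : X ⟶ Z) [Epi f] (hK : IsIteratedExtension P (kernel f))
    (hZ : IsIteratedExtension P Z) : IsIteratedExtension P X := by
  induction hZ generalizing X with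
  | of_isZero hZ =>
    have := kernel.ι_of_zero (hZ.eq_of_tgt f 0)
    exact hK.of_iso (asIso (kernel.ι f))
  | extend g _ hW ih =>
    have := epi_kernelMap_comp f g
    exact extend (f ≫ g) (ih _ (hK.of_iso (kernelKernelMapCompIso f g).symm)) hW

lemma of_shortExact {S : ShortComplex C} (hS : S.ShortExact) (h₁ : IsIteratedExtension P S.X₁)
    (h₃ : IsIteratedExtension P S.X₃) : IsIteratedExtension P S.X₂ :=
  have := hS.mono_f
  have := hS.epi_g
  of_epi_of_kernel S.g
    (h₁.of_iso (IsLimit.conePointUniqueUpToIso hS.exact.fIsKernel (limit.isLimit _))) h₃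

lemma isSerre (hP : IsTopologizing P) : IsSerre (IsIteratedExtension P) :=
  ⟨⟨⟨0, of_isZero (isZero_zero C)⟩, fun e h => h.of_iso e,
      fun X Y hX hY =>
        of_shortExact (ShortComplex.Splitting.ofHasBinaryBiproduct X Y).shortExact hX hY,
      fun f _ h => h.of_mono hP f, fun f _ h => h.of_epi hP f⟩,
    fun _ hS h₁ h₃ => of_shortExact hS h₁ h₃⟩

lemma prop_of_isSerre {Q : C → Prop} (hQ : IsSerre Q) (hPQ : ∀ X, P X → Q X) {X : C}
    (h : IsIteratedExtension P X) : Q X := by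
  induction h with
  | of_isZero hX =>
    obtain ⟨W, hW⟩ := hQ.1.1
    have : Mono (hX.to_ W) := ⟨fun _ _ _ => hX.eq_of_tgt _ _⟩
    exact hQ.1.prop_of_mono (hX.to_ W) hW
  | extend g _ hZ ih => exact hQ.2 _ (shortExact_kernel g) ih (hPQ _ hZ)

end IsIteratedExtension

def HasQuotientIn (P : C → Prop) {X : C} (A B : Subobject X) : Prop :=
  ∃ (h : A ≤ B) (b : C), P b ∧ Nonempty (cokernel (Subobject.ofLE A B h) ≅ b)

lemma hasDevissageFiltration_iff {P : C → Prop} {X : C} :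
    HasDevissageFiltration P X ↔ ∃ (n : ℕ) (s : Fin (n + 1) → Subobject X),
      s 0 = ⊤ ∧ s (Fin.last n) = ⊥ ∧ ∀ i : Fin n, HasQuotientIn P (s i.succ) (s i.castSucc) := by
  constructor
  · rintro ⟨n, s, hmono, h0, hlast, hq⟩
    exact ⟨n, s, h0, hlast, fun i => ⟨hmono i, hq i⟩⟩
  · rintro ⟨n, s, h0, hlast, hq⟩
    choose hmono hq using hq
    exact ⟨n, s, hmono, h0, hlast, hq⟩

lemma IsIteratedExtension.of_hasQuotientIn {P : C → Prop} (hP : IsTopologizing P) {X : C}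
    {A B : Subobject X} (hAB : HasQuotientIn P A B) (hA : IsIteratedExtension P A) :
    IsIteratedExtension P B := by
  obtain ⟨hle, b, hb, ⟨e⟩⟩ := hAB
  exact extend (cokernel.π (Subobject.ofLE A B hle))
    (hA.of_iso (IsLimit.conePointUniqueUpToIso (ShortComplex.exact_cokernel _).fIsKernel
      (limit.isLimit _)))
    (hP.prop_of_iso e.symm hb)

lemma IsIteratedExtension.of_hasDevissageFiltration {P : C → Prop} (hP : IsTopologizing P)
    {X : C} (h : HasDevissageFiltration P X) : IsIteratedExtension P X := by
  obtain ⟨n, s, h0, hlast, hs⟩ := hasDevissageFiltration_iff.1 h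
  have hsi : ∀ i, IsIteratedExtension P (s i) := by
    refine Fin.reverseInduction ?_ fun i hi => of_hasQuotientIn hP (hs i) hi
    rw [hlast]
    exact of_isZero ((isZero_zero C).of_iso Subobject.botCoeIsoZero)
  have htop := hsi 0
  rw [h0] at htop
  exact htop.of_iso (asIso (⊤ : Subobject X).arrow)

lemma Subobject.map_obj_eq_mk {D : Type*} [Category D] {A X : D} (f : A ⟶ X) [Mono f]
    (B : Subobject A) : (Subobject.map f).obj B = Subobject.mk (B.arrow ≫ f) := by
  conv_lhs => rw [← Subobject.mk_arrow B]
  rfl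

lemma HasQuotientIn.map {P : C → Prop} {A X : C} (f : A ⟶ X) [Mono f] {B B' : Subobject A}
    (h : HasQuotientIn P B B') :
    HasQuotientIn P ((Subobject.map f).obj B) ((Subobject.map f).obj B') := by
  obtain ⟨hle, b, hb, ⟨e⟩⟩ := h
  rw [Subobject.map_obj_eq_mk, Subobject.map_obj_eq_mk]
  refine ⟨Subobject.mk_le_mk_of_comm (Subobject.ofLE B B' hle) (by simp), b, hb,
    ⟨cokernel.mapIso _ _ (Subobject.underlyingIso _) (Subobject.underlyingIso _) ?_ ≪≫ e⟩⟩
  simp [← cancel_mono (B'.arrow ≫ f)]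

lemma hasQuotientIn_mk_top {P : C → Prop} {A X b : C} (f : A ⟶ X) [Mono f] (hb : P b)
    (e : cokernel f ≅ b) : HasQuotientIn P (Subobject.mk f) ⊤ :=
  ⟨le_top, b, hb, ⟨cokernel.mapIso _ f (Subobject.underlyingIso f)
    (asIso (⊤ : Subobject X).arrow) (by simp [Subobject.ofLE_arrow]) ≪≫ e⟩⟩

lemma HasDevissageFiltration.of_isZero {P : C → Prop} {X : C} (hX : IsZero X) :
    HasDevissageFiltration P X :=
  hasDevissageFiltration_iff.2
    ⟨0, fun _ => ⊤, rfl, (Subobject.subsingleton_of_isZero hX).elim _ _, fun i => i.elim0⟩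

lemma HasDevissageFiltration.of_mono {P : C → Prop} {A X : C} (f : A ⟶ X) [Mono f]
    (hA : HasDevissageFiltration P A) (hf : HasQuotientIn P (Subobject.mk f) ⊤) :
    HasDevissageFiltration P X := by
  obtain ⟨n, s, h0, hlast, hs⟩ := hasDevissageFiltration_iff.1 hA
  refine hasDevissageFiltration_iff.2
    ⟨n + 1, Fin.cons ⊤ fun i => (Subobject.map f).obj (s i), rfl, ?_, Fin.cases ?_ fun i => ?_⟩
  · rw [← Fin.succ_last, Fin.cons_succ, hlast, Subobject.map_bot]
  · simpa only [Fin.cons_succ, Fin.castSucc_zero, Fin.cons_zero, h0, Subobject.map_top] using hf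
  · rw [← Fin.succ_castSucc]
    simpa only [Fin.cons_succ] using (hs i).map f

lemma IsIteratedExtension.hasDevissageFiltration {P : C → Prop} {X : C}
    (h : IsIteratedExtension P X) : HasDevissageFiltration P X := by
  induction h with
  | of_isZero hX => exact .of_isZero hX
  | extend g _ hZ ih =>
    exact ih.of_mono (kernel.ι g) (hasQuotientIn_mk_top _ hZ
      (IsColimit.coconePointUniqueUpToIso (colimit.isColimit _)
        (ShortComplex.exact_kernel g).gIsCokernel))

/-- Let `𝒜` be an abelian category all of whose objects are Noetherian and
`ℬ` a topologizing subcategory. Then the dévissage condition (every object admits a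
finite filtration with subquotients in `ℬ`) holds if and only if the Serre radical of
`ℬ` is all of `𝒜`. -/
theorem stmt_16 [∀ X : C, IsNoetherianObject X]
    (P : C → Prop) (hP : IsTopologizing P) :
    (∀ X : C, HasDevissageFiltration P X) ↔ (∀ X : C, serreRadical P X) := by
  constructor
  · intro h X Q hQ hPQ
    exact (IsIteratedExtension.of_hasDevissageFiltration hP (h X)).prop_of_isSerre hQ hPQ
  · intro h X
    exact (h X _ (IsIteratedExtension.isSerre hP) fun _ => .of_prop).hasDevissageFiltration
end
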